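/- Let P = ⋃_{k=2}^∞ {k! + ik : i = 0, …, k!−1} ⊂ ℕ. Then for every sufficiently large integer T ≥ 1, T/(2μ(T)) ≤ #(P ∩ [1,T]) ≤ 3T/μ(T). -/
import Mathlib


open scoped ENNReal
open Filter
open scoped Classical

noncomputable section

namespace LaurentCF

/-! We model the field `𝔽_q((X⁻¹))` of formal Laurent series in `X⁻¹` by
`LaurentSeries Fq = HahnSeries ℤ Fq`, where the Hahn-series variable plays the
role of `X⁻¹`: the coefficient at `i : ℤ` is the coefficient `c_i` of `X^{-i}`. -/

variable (Fq : Type) [Field Fq] [Fintype Fq]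

/-- `deg x = - inf {n : ℤ | c_n ≠ 0}` (with junk value `0` at `x = 0`). -/
def lsDeg (x : LaurentSeries Fq) : ℤ := -(HahnSeries.order x)

/-- The absolute value `‖x‖_q = q ^ (deg x)`, `‖0‖_q = 0`. -/
def qnorm (x : LaurentSeries Fq) : ℝ :=
  if x = 0 then 0 else (Fintype.card Fq : ℝ) ^ (lsDeg Fq x)

variable {Fq}

lemma one_lt_cardR : (1 : ℝ) < (Fintype.card Fq : ℝ) := by
  exact_mod_cast Fintype.one_lt_card

lemma qnorm_nonneg (x : LaurentSeries Fq) : 0 ≤ qnorm Fq x := by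
  unfold qnorm
  split
  · exact le_refl 0
  · exact zpow_nonneg (by positivity) _

lemma qnorm_zero : qnorm Fq (0 : LaurentSeries Fq) = 0 := by simp [qnorm]

lemma qnorm_pos {x : LaurentSeries Fq} (hx : x ≠ 0) : 0 < qnorm Fq x := by
  unfold qnorm
  rw [if_neg hx]
  exact zpow_pos (lt_trans one_pos one_lt_cardR) _

lemma qnorm_neg (x : LaurentSeries Fq) : qnorm Fq (-x) = qnorm Fq x := by
  unfold qnorm lsDeg
  rw [HahnSeries.order_neg, neg_eq_zero]

lemma qnorm_add_le (x y : LaurentSeries Fq) :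
    qnorm Fq (x + y) ≤ max (qnorm Fq x) (qnorm Fq y) := by
  by_cases hxy : x + y = 0
  · rw [hxy, qnorm_zero]
    exact le_max_of_le_left (qnorm_nonneg x)
  by_cases hx : x = 0
  · simp [hx, le_max_of_le_right (le_refl (qnorm Fq y))]
  by_cases hy : y = 0
  · simp [hy, le_max_of_le_left (le_refl (qnorm Fq x))]
  have hmin : min (HahnSeries.order x) (HahnSeries.order y) ≤ HahnSeries.order (x + y) :=
    HahnSeries.min_order_le_order_add hxy
  have hdeg : lsDeg Fq (x + y) ≤ max (lsDeg Fq x) (lsDeg Fq y) := by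
    unfold lsDeg
    rw [min_le_iff] at hmin
    rw [le_max_iff]
    omega
  have h1 : (1 : ℝ) ≤ (Fintype.card Fq : ℝ) := le_of_lt one_lt_cardR
  unfold qnorm
  rw [if_neg hxy, if_neg hx, if_neg hy]
  rcases le_total (lsDeg Fq x) (lsDeg Fq y) with h | h
  · refine le_max_of_le_right ?_
    exact zpow_le_zpow_right₀ h1 (by rw [max_eq_right h] at hdeg; exact hdeg)
  · refine le_max_of_le_left ?_
    exact zpow_le_zpow_right₀ h1 (by rw [max_eq_left h] at hdeg; exact hdeg)

variable (Fq) in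
/-- The open unit disc `Δ = {x : ‖x‖_q < 1}`. -/
structure Delta : Type where
  val : LaurentSeries Fq
  norm_lt : qnorm Fq val < 1

lemma Delta.ext' {x y : Delta Fq} (h : x.val = y.val) : x = y := by
  cases x; cases y; simpa using h

instance : EMetricSpace (Delta Fq) where
  edist x y := ENNReal.ofReal (qnorm Fq (x.val - y.val))
  edist_self x := by simp [qnorm]
  edist_comm x y := by
    show ENNReal.ofReal _ = ENNReal.ofReal _
    rw [show x.val - y.val = -(y.val - x.val) by ring, qnorm_neg]
  edist_triangle x y z := by
    show ENNReal.ofReal _ ≤ ENNReal.ofReal _ + ENNReal.ofReal _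
    have h := qnorm_add_le (x.val - y.val) (y.val - z.val)
    rw [sub_add_sub_cancel] at h
    refine le_trans (ENNReal.ofReal_le_ofReal h) ?_
    rcases max_cases (qnorm Fq (x.val - y.val)) (qnorm Fq (y.val - z.val)) with ⟨heq, _⟩ | ⟨heq, _⟩ <;>
      rw [heq]
    · exact le_self_add
    · exact le_add_self
  eq_of_edist_eq_zero := by
    intro x y h
    have h : ENNReal.ofReal (qnorm Fq (x.val - y.val)) = 0 := h
    rw [ENNReal.ofReal_eq_zero] at h
    by_contra hne
    have : x.val - y.val ≠ 0 := fun hc => hne (Delta.ext' (sub_eq_zero.mp hc))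
    exact absurd h (not_le.mpr (qnorm_pos this))

instance : MeasurableSpace (Delta Fq) := borel _
instance : BorelSpace (Delta Fq) := ⟨rfl⟩

variable (Fq)

/-- The integral part `[x] = ∑_{i ≤ 0} c_i X^{-i}`. -/
def intPart (x : LaurentSeries Fq) : LaurentSeries Fq :=
  ⟨fun i => if i ≤ 0 then x.coeff i else 0, x.isPWO_support'.mono (by
    intro i hi
    simp only [Function.mem_support, ne_eq] at hi ⊢
    intro h
    apply hi
    split <;> simp [h])⟩

/-- The Gauss-type map `T(x) = 1/x - [1/x]`, `T(0) = 0` (extended by the same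
formula outside `Δ`). -/
def Tmap (x : LaurentSeries Fq) : LaurentSeries Fq :=
  if x = 0 then 0 else x⁻¹ - intPart Fq x⁻¹

/-- The natural interpretation of a polynomial `P(X) = ∑ a_i X^i` as a Laurent
series in `X⁻¹` (coefficient `a_i` at index `-i`). -/
def polyToLS (P : Polynomial Fq) : LaurentSeries Fq :=
  ∑ i ∈ P.support, HahnSeries.single (-(i : ℤ)) (P.coeff i)

/-- The inverse correspondence (junk outside the range of `polyToLS`). -/
def lsToPoly : LaurentSeries Fq → Polynomial Fq := Function.invFun (polyToLS Fq)

/-- The digit `A_{n+1}(x) = [1 / T^n(x)]`, read off as a polynomial in `X`.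
So `digit Fq n x` is the `(n+1)`-st continued fraction digit of `x`. -/
def digit (n : ℕ) (x : LaurentSeries Fq) : Polynomial Fq :=
  lsToPoly Fq (intPart Fq ((Tmap Fq)^[n] x)⁻¹)

/-- The set of rational points: the image of `𝔽_q(X)` in `𝔽_q((X⁻¹))`. -/
def ratSet : Set (LaurentSeries Fq) := Set.range ((↑) : RatFunc Fq → LaurentSeries Fq)

/-- `𝔽_q^1[X]`, the set of polynomials of degree at least one. -/
def poly1 : Set (Polynomial Fq) := {A | 1 ≤ A.natDegree}

/-- The set `E` of points of `Δ ∖ 𝔽_q(X)` with pairwise distinct digits. -/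
def Eset : Set (Delta Fq) :=
  {x | x.val ∉ ratSet Fq ∧ ∀ m n : ℕ, m ≠ n → digit Fq m x.val ≠ digit Fq n x.val}

/-- `Q_N(S)`, the elements of `S` of degree at most `N`. -/
def QN (N : ℕ) (S : Set (Polynomial Fq)) : Set (Polynomial Fq) :=
  {A ∈ S | A.natDegree ≤ N}

/-- The relative upper density `d̄_q(U|S)`. -/
def relDensQ (U S : Set (Polynomial Fq)) : ℝ :=
  Filter.limsup (fun N : ℕ => ((QN Fq N U).ncard : ℝ) / ((QN Fq N S).ncard)) Filter.atTop

/-- `d̄_q(U) := d̄_q(U | 𝔽_q^1[X])`. -/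
def densQ (U : Set (Polynomial Fq)) : ℝ := relDensQ Fq U (poly1 Fq)

/-- The relative upper density `d̄(B|G)` for sets of natural numbers. -/
def relDensN (B G : Set ℕ) : ℝ :=
  Filter.limsup (fun N : ℕ => ((B ∩ Set.Icc 1 N).ncard : ℝ) / ((G ∩ Set.Icc 1 N).ncard))
    Filter.atTop

/-- The upper density `d̄(B) = d̄(B|ℕ)`. -/
def densN (B : Set ℕ) : ℝ :=
  Filter.limsup (fun N : ℕ => ((B ∩ Set.Icc 1 N).ncard : ℝ) / (N : ℝ)) Filter.atTop

/-- `deg S`, the set of degrees of elements of `S`. -/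
def degSet (S : Set (Polynomial Fq)) : Set ℕ := Polynomial.natDegree '' S

/-- `S` has growth density with exponent `α`. -/
def HasGrowthDensity (S : Set (Polynomial Fq)) (α : ℝ) : Prop :=
  ∃ γ₁ > (0 : ℝ), ∃ γ₂ > (0 : ℝ), ∃ β ≥ (0 : ℝ), ∀ᶠ N : ℕ in Filter.atTop,
    γ₁ * (Fintype.card Fq : ℝ) ^ ((N : ℝ) / α) / (N : ℝ) ^ β ≤ ((QN Fq N S).ncard : ℝ) ∧
    ((QN Fq N S).ncard : ℝ) ≤ γ₂ * (Fintype.card Fq : ℝ) ^ ((N : ℝ) / α) / (N : ℝ) ^ β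


/-- The fundamental cylinder `I(A_1, …, A_n)` (here `A : Fin n → _`, with `A i`
playing the role of `A_{i+1}`): the set of `x ∈ Δ` whose first `n` digits are
defined and equal to the prescribed ones. -/
def cylinder (n : ℕ) (A : Fin n → Polynomial Fq) : Set (Delta Fq) :=
  {x | ∀ i : Fin n, (Tmap Fq)^[(i : ℕ)] x.val ≠ 0 ∧ digit Fq i x.val = A i}

/-- The convergence exponent `τ(S) = inf {s ≥ 0 : ∑_{A ∈ S} (q^{-2 deg A})^s < ∞}`. -/
def convExp (S : Set (Polynomial Fq)) : ℝ :=
  sInf {s : ℝ | 0 ≤ s ∧ Summable (fun A : S =>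
    ((Fintype.card Fq : ℝ) ^ (-2 * ((A : Polynomial Fq).natDegree : ℤ))) ^ s)}

/-- The set `E` together with the digit restriction and growth condition defining a
seed set: `R_t(K) = {x ∈ E : A_n(x) ∈ K, (2n)^t ≤ deg A_n(x) < (2n+1)^t for all n ≥ 1}`.
(Recall `digit Fq n x` is `A_{n+1}(x)`.) -/
def seedSet (t : ℕ) (K : Set (Polynomial Fq)) : Set (Delta Fq) :=
  {x | x ∈ Eset Fq ∧ ∀ n : ℕ,
    digit Fq n x.val ∈ K ∧
    (2 * (n + 1)) ^ t ≤ (digit Fq n x.val).natDegree ∧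
    (digit Fq n x.val).natDegree < (2 * (n + 1) + 1) ^ t}

/-- The set `𝓘_q` of irreducible polynomials of positive degree. -/
def irreds : Set (Polynomial Fq) := {P ∈ poly1 Fq | Irreducible P}

/-- `f` is Hölder continuous with exponent `γ` on `F`. -/
def HolderOnDelta (F : Set (Delta Fq)) (f : Delta Fq → Delta Fq) (γ : ℝ) : Prop :=
  ∃ C > (0 : ℝ), ∀ x ∈ F, ∀ y ∈ F,
    qnorm Fq ((f x).val - (f y).val) ≤ C * qnorm Fq (x.val - y.val) ^ γ

/-- `f` is almost Lipschitz on `F`: Hölder continuous with every exponent `γ ∈ (0,1)`. -/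
def AlmostLipschitzOn (F : Set (Delta Fq)) (f : Delta Fq → Delta Fq) : Prop :=
  ∀ γ : ℝ, 0 < γ → γ < 1 → HolderOnDelta Fq F f γ

/-- Insertion of the blocks `W_k` (given as lists, sorted by degree) into the digit
sequence `a` (where `a n` is the `(n+1)`-st digit), each block `W_k` being inserted
immediately after the digit with (1-based) index `M k`. -/
def insertSeq (M : ℕ → ℕ) (W : ℕ → List (Polynomial Fq)) (a : ℕ → Polynomial Fq)
    (n : ℕ) : Polynomial Fq :=
  let c : ℕ → ℕ := fun k => M k + ∑ j ∈ Finset.range k, (W (j + 1)).length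
  let k := Nat.findGreatest (fun j => c j ≤ n) n
  if n - c k < M (k + 1) - M k then a (M k + (n - c k))
  else (W (k + 1)).getD (n - c k - (M (k + 1) - M k)) 0

/-- The function `μ : [1,∞) → ℕ`, `μ(x) = k` for `x ∈ [k!, (k+1)!)`. -/
def muFn (x : ℝ) : ℕ := sSup {k : ℕ | (k.factorial : ℝ) ≤ x}

/-- The set `P = ⋃_{k ≥ 2} {k! + ik : i = 0, …, k! - 1}`. -/
def Pset : Set ℕ :=
  ⋃ k ∈ {k : ℕ | 2 ≤ k}, {m | ∃ i < k.factorial, m = k.factorial + i * k}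

lemma mem_Pset {m : ℕ} :
    m ∈ Pset ↔ ∃ k, 2 ≤ k ∧ ∃ i, i < k.factorial ∧ m = k.factorial + i * k := by
  simp [Pset]

lemma sum_fact_le (n : ℕ) : (∑ k ∈ Finset.Icc 2 n, k.factorial) ≤ 2 * n.factorial := by
  induction n with
  | zero => simp
  | succ n ih =>
    rcases Nat.lt_or_ge n 1 with h | h
    · interval_cases n
      simp
    · rw [Finset.sum_Icc_succ_top (by omega : 2 ≤ n + 1)]
      have h2 : 2 * n.factorial ≤ (n + 1).factorial := by
        rw [Nat.factorial_succ]
        exact Nat.mul_le_mul_right _ (by omega)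
      omega

/-- Counting estimate for the set `P = ⋃_{k ≥ 2} {k! + ik : 0 ≤ i < k!}`. -/
theorem Pset_count :
    ∀ᶠ T : ℕ in Filter.atTop,
      (T : ℝ) / (2 * (muFn T : ℝ)) ≤ ((Pset ∩ Set.Icc 1 T).ncard : ℝ) ∧
      ((Pset ∩ Set.Icc 1 T).ncard : ℝ) ≤ 3 * (T : ℝ) / (muFn T : ℝ) := by
  rw [Filter.eventually_atTop]
  refine ⟨6, fun T hT => ?_⟩
  have hex : ∃ K : ℕ, 3 ≤ K ∧ Nat.factorial K ≤ T ∧ T < Nat.factorial (K + 1) := by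
    have hP3 : Nat.factorial 3 ≤ T := by simp [Nat.factorial]; omega
    refine ⟨Nat.findGreatest (fun k => Nat.factorial k ≤ T) T, ?_, ?_, ?_⟩
    · exact Nat.le_findGreatest (P := fun k => Nat.factorial k ≤ T) (by omega) hP3
    · exact Nat.findGreatest_spec (P := fun k => Nat.factorial k ≤ T) (m := 3) (by omega) hP3
    · by_contra h
      push_neg at h
      have h1 : Nat.findGreatest (fun k => Nat.factorial k ≤ T) T + 1 ≤ T :=
        le_trans (Nat.self_le_factorial _) h
      have h2 := Nat.le_findGreatest (P := fun k => Nat.factorial k ≤ T) h1 h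
      omega
  obtain ⟨K, hK3, hK1, hK2⟩ := hex
  -- μ(T) = K
  have hmu : muFn (T : ℝ) = K := by
    unfold muFn
    have hset : {k : ℕ | ((k.factorial : ℝ)) ≤ (T : ℝ)} = Set.Iic K := by
      ext k
      simp only [Set.mem_setOf_eq, Set.mem_Iic, Nat.cast_le]
      constructor
      · intro hk
        by_contra hkK
        push_neg at hkK
        have : (K + 1).factorial ≤ k.factorial := Nat.factorial_le hkK
        omega
      · intro hk
        exact le_trans (Nat.factorial_le hk) hK1
    rw [hset, csSup_Iic]
  -- the finset version of the set
  set F : Finset ℕ := (Finset.Icc 1 T).filter (· ∈ Pset) with hFdef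
  have hFcoe : Pset ∩ Set.Icc 1 T = ↑F := by
    ext m
    simp only [hFdef, Finset.coe_filter, Finset.mem_Icc, Set.mem_inter_iff, Set.mem_Icc,
      Set.mem_setOf_eq]
    tauto
  have hncard : (Pset ∩ Set.Icc 1 T).ncard = F.card := by
    rw [hFcoe, Set.ncard_coe_finset]
  set q := (T - K.factorial) / K with hqdef
  have hKpos : 0 < K := by omega
  -- upper bound (ℕ)
  have hub : K * F.card ≤ 3 * T := by
    have hsub : F ⊆ (Finset.Icc 2 K).biUnion (fun k =>
        ((Finset.range k.factorial).image (fun i => k.factorial + i * k)).filter (· ≤ T)) := by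
      intro m hm
      rw [hFdef, Finset.mem_filter, Finset.mem_Icc] at hm
      obtain ⟨⟨hm1, hm2⟩, hmP⟩ := hm
      obtain ⟨k, hk2, i, hik, rfl⟩ := mem_Pset.mp hmP
      have hkK : k ≤ K := by
        by_contra hkK
        push_neg at hkK
        have : (K + 1).factorial ≤ k.factorial := Nat.factorial_le hkK
        omega
      simp only [Finset.mem_biUnion, Finset.mem_Icc, Finset.mem_filter, Finset.mem_image,
        Finset.mem_range]
      exact ⟨k, ⟨hk2, hkK⟩, ⟨i, hik, rfl⟩, hm2⟩
    have hcard1 := Finset.card_le_card hsub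
    have hcard2 := Finset.card_biUnion_le (s := Finset.Icc 2 K) (t := fun k =>
        ((Finset.range k.factorial).image (fun i => k.factorial + i * k)).filter (· ≤ T))
    have hsplit : Finset.Icc 2 K = insert K (Finset.Icc 2 (K - 1)) := by
      ext x
      simp only [Finset.mem_Icc, Finset.mem_insert]
      omega
    have hKterm : (((Finset.range K.factorial).image
        (fun i => K.factorial + i * K)).filter (· ≤ T)).card ≤ q + 1 := by
      have : ((Finset.range K.factorial).image
          (fun i => K.factorial + i * K)).filter (· ≤ T) ⊆
          (Finset.range (q + 1)).image (fun i => K.factorial + i * K) := by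
        intro m hm
        simp only [Finset.mem_filter, Finset.mem_image, Finset.mem_range] at hm ⊢
        obtain ⟨⟨i, hi, rfl⟩, hle⟩ := hm
        refine ⟨i, ?_, rfl⟩
        have h1 : i * K ≤ T - K.factorial := by omega
        have h2 := (Nat.le_div_iff_mul_le hKpos).mpr h1
        exact Nat.lt_succ_of_le (hqdef ▸ h2)
      calc _ ≤ ((Finset.range (q + 1)).image (fun i => K.factorial + i * K)).card :=
              Finset.card_le_card this
        _ ≤ q + 1 := le_trans (Finset.card_image_le) (by simp)
    have hrest : ∀ k ∈ Finset.Icc 2 (K - 1),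
        (((Finset.range k.factorial).image
          (fun i => k.factorial + i * k)).filter (· ≤ T)).card ≤ k.factorial := by
      intro k _
      calc _ ≤ ((Finset.range k.factorial).image (fun i => k.factorial + i * k)).card :=
              Finset.card_le_card (Finset.filter_subset _ _)
        _ ≤ k.factorial := le_trans Finset.card_image_le (by simp)
    have hsum : ∑ k ∈ Finset.Icc 2 K,
        (((Finset.range k.factorial).image
          (fun i => k.factorial + i * k)).filter (· ≤ T)).card
        ≤ 2 * (K - 1).factorial + (q + 1) := by
      rw [hsplit, Finset.sum_insert (by simp only [Finset.mem_Icc]; omega)]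
      have := Finset.sum_le_sum hrest
      have := sum_fact_le (K - 1)
      omega
    have hcard : F.card ≤ 2 * (K - 1).factorial + (q + 1) := by
      calc F.card ≤ _ := hcard1
        _ ≤ _ := hcard2
        _ ≤ _ := hsum
    have hfac : K.factorial = K * (K - 1).factorial := by
      conv_lhs => rw [show K = (K - 1) + 1 by omega]
      rw [Nat.factorial_succ]
      congr 1
      omega
    have hq : K * q ≤ T - K.factorial := by
      rw [hqdef, mul_comm]
      exact Nat.div_mul_le_self _ _
    have h1 : K * F.card ≤ K * (2 * (K - 1).factorial + (q + 1)) :=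
      Nat.mul_le_mul_left _ hcard
    have h2 : K * (2 * (K - 1).factorial + (q + 1)) = 2 * K.factorial + K * q + K := by
      rw [hfac]; ring
    have hKK : K ≤ K.factorial := Nat.self_le_factorial _
    have hq' : K * q + K.factorial ≤ T := by omega
    calc K * F.card ≤ 2 * K.factorial + K * q + K := le_trans h1 (le_of_eq h2)
      _ ≤ 3 * T := by omega
  -- lower bound (ℕ): an n₀ with n₀ ≤ F.card and T ≤ 2 * K * n₀
  have hlb : ∃ n₀ : ℕ, n₀ ≤ F.card ∧ T ≤ 2 * K * n₀ := by
    have hfac : K.factorial = K * (K - 1).factorial := by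
      conv_lhs => rw [show K = (K - 1) + 1 by omega]
      rw [Nat.factorial_succ]
      congr 1
      omega
    have hfacsucc : (K + 1).factorial = (K + 1) * K.factorial := Nat.factorial_succ _
    rcases Nat.lt_or_ge T (2 * K.factorial) with hc | hc
    · -- use the full block K - 1
      set J := K - 1 with hJdef
      have hJ2 : 2 ≤ J := by omega
      refine ⟨J.factorial, ?_, ?_⟩
      · have hsub : (Finset.range J.factorial).image (fun i => J.factorial + i * J) ⊆ F := by
          intro m hm
          simp only [Finset.mem_image, Finset.mem_range] at hm
          obtain ⟨i, hi, rfl⟩ := hm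
          have hle : J.factorial + i * J ≤ T := by
            have h1 : i * J ≤ (J.factorial - 1) * J := Nat.mul_le_mul_right _ (by omega)
            have h2 : (J.factorial - 1) * J = J.factorial * J - J := by
              rw [Nat.sub_mul, one_mul]
            have h3 : J ≤ J.factorial * J :=
              Nat.le_mul_of_pos_left _ (Nat.factorial_pos _)
            have h4 : J.factorial + J.factorial * J ≤ K.factorial + J := by
              have : K.factorial = J.factorial * K := by rw [hfac, hJdef, mul_comm]
              rw [this]
              have : J.factorial * K = J.factorial + J.factorial * J := by
                rw [show K = J + 1 by omega]; ring
              omega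
            omega
          rw [hFdef, Finset.mem_filter, Finset.mem_Icc]
          refine ⟨⟨by have := Nat.factorial_pos J; omega, hle⟩, mem_Pset.mpr ⟨J, hJ2, i, hi, rfl⟩⟩
        have hinj : Function.Injective (fun i : ℕ => J.factorial + i * J) := by
          intro a b hab
          simp only at hab
          have : a * J = b * J := by omega
          exact Nat.eq_of_mul_eq_mul_right (by omega) this
        calc J.factorial = ((Finset.range J.factorial).image
              (fun i => J.factorial + i * J)).card := by
              rw [Finset.card_image_of_injective _ hinj, Finset.card_range]
          _ ≤ F.card := Finset.card_le_card hsub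
      · have : 2 * K * J.factorial = 2 * K.factorial := by rw [hfac]; ring
        omega
    · -- use the partial block K
      set m := min K.factorial (q + 1) with hmdef
      refine ⟨m, ?_, ?_⟩
      · have hsub : (Finset.range m).image (fun i => K.factorial + i * K) ⊆ F := by
          intro x hx
          simp only [Finset.mem_image, Finset.mem_range] at hx
          obtain ⟨i, hi, rfl⟩ := hx
          have hiq : i ≤ q := by omega
          have hle : K.factorial + i * K ≤ T := by
            have h1 : i * K ≤ q * K := Nat.mul_le_mul_right _ hiq
            have h2 : q * K ≤ T - K.factorial := by
              rw [hqdef]; exact Nat.div_mul_le_self _ _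
            omega
          rw [hFdef, Finset.mem_filter, Finset.mem_Icc]
          refine ⟨⟨by have := Nat.factorial_pos K; omega, hle⟩, mem_Pset.mpr ⟨K, by omega, i, by omega, rfl⟩⟩
        have hinj : Function.Injective (fun i : ℕ => K.factorial + i * K) := by
          intro a b hab
          simp only at hab
          have : a * K = b * K := by omega
          exact Nat.eq_of_mul_eq_mul_right hKpos this
        calc m = ((Finset.range m).image (fun i => K.factorial + i * K)).card := by
              rw [Finset.card_image_of_injective _ hinj, Finset.card_range]
          _ ≤ F.card := Finset.card_le_card hsub
      · have hdm := Nat.div_add_mod (T - K.factorial) K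
        have hmod := Nat.mod_lt (T - K.factorial) hKpos
        have h1 : T ≤ 2 * K * (q + 1) := by
          have e0 : K * q + (T - K.factorial) % K = T - K.factorial := hdm
          have e1 : 2 * K * (q + 1) = 2 * (K * q) + 2 * K := by ring
          omega
        have h2 : T ≤ 2 * K * K.factorial := by
          have : (K + 1) * K.factorial ≤ 2 * K * K.factorial :=
            Nat.mul_le_mul_right _ (by omega)
          omega
        rcases min_cases K.factorial (q + 1) with ⟨hmin, _⟩ | ⟨hmin, _⟩ <;> rw [hmdef, hmin]
        · exact h2
        · exact h1
  -- conclude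
  obtain ⟨n₀, hn₀F, hn₀T⟩ := hlb
  rw [hmu, hncard]
  have hKr : (0 : ℝ) < (K : ℝ) := by exact_mod_cast hKpos
  constructor
  · rw [div_le_iff₀ (by positivity)]
    have : (T : ℝ) ≤ (2 * K * n₀ : ℕ) := by exact_mod_cast hn₀T
    have hn : ((2 * K * n₀ : ℕ) : ℝ) ≤ (F.card : ℝ) * (2 * K) := by
      push_cast
      have : (n₀ : ℝ) ≤ (F.card : ℝ) := by exact_mod_cast hn₀F
      nlinarith
    linarith
  · rw [le_div_iff₀ hKr]
    have : ((K * F.card : ℕ) : ℝ) ≤ ((3 * T : ℕ) : ℝ) := by exact_mod_cast hub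
    push_cast at this
    nlinarith


end LaurentCF
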